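/- Let G be a finite simple graph with vertex set V, let k be a positive integer, let T ⊆ V satisfy |Γ_T(Z)| ≥ k − 1 for every Steiner T-cut Z, and fix r ∈ T. Let D be the family of demand cuts, i.e., Steiner (T,r)-cuts X with |Γ_T(X)| = k − 1. If Z and W are distinct min-cores, X ∈ C(Z) and Y ∈ C(W), then X ∩ Y ∩ T = ∅. -/

import Mathlib

/-!
If cores `X ∈ C(Z)` and `Y ∈ C(W)` shared a terminal, then `X ∩ Y` and `X ∪ Y` would both be
Steiner `T`-cuts (the root lies outside `(X ∪ Y)⁺`), so both have at least `k - 1` terminal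
neighbours. Submodularity of `|Γ_T|` then forces `|Γ_T(X ∩ Y)| = k - 1`: `X ∩ Y` is a demand cut
and contains a min-core, which must be both `Z` and `W` because `X` and `Y` are cores.
-/

/-- `nbr G X` is Γ(X): the set of vertices outside `X` adjacent to a vertex of `X`. -/
def nbr {V : Type*} [Fintype V] [DecidableEq V] (G : SimpleGraph V) [DecidableRel G.Adj]
    (X : Finset V) : Finset V :=
  Finset.univ.filter (fun v => v ∉ X ∧ ∃ u ∈ X, G.Adj u v)

/-- `cl G X` is X⁺ = X ∪ Γ(X). -/
def cl {V : Type*} [Fintype V] [DecidableEq V] (G : SimpleGraph V) [DecidableRel G.Adj]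
    (X : Finset V) : Finset V :=
  X ∪ nbr G X

/-- A demand cut: a Steiner (T,r)-cut X with |Γ_T(X)| = k - 1. -/
def IsDemand {V : Type*} [Fintype V] [DecidableEq V] (G : SimpleGraph V) [DecidableRel G.Adj]
    (T : Finset V) (k : ℕ) (r : V) (X : Finset V) : Prop :=
  (X ∩ T).Nonempty ∧ (T \ cl G X).Nonempty ∧ r ∉ cl G X ∧ (nbr G X ∩ T).card = k - 1

/-- A min-core: a minimal demand cut. -/
def IsMinCore {V : Type*} [Fintype V] [DecidableEq V] (G : SimpleGraph V) [DecidableRel G.Adj]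
    (T : Finset V) (k : ℕ) (r : V) (X : Finset V) : Prop :=
  IsDemand G T k r X ∧ ∀ Y : Finset V, IsDemand G T k r Y → Y ⊆ X → Y = X

/-- A core: a demand cut containing exactly one min-core as a subset. -/
def IsCore {V : Type*} [Fintype V] [DecidableEq V] (G : SimpleGraph V) [DecidableRel G.Adj]
    (T : Finset V) (k : ℕ) (r : V) (X : Finset V) : Prop :=
  IsDemand G T k r X ∧ ∃! Z : Finset V, IsMinCore G T k r Z ∧ Z ⊆ X

/-- The core family C(Z) of a min-core Z: the cores containing Z. -/
def coreFam {V : Type*} [Fintype V] [DecidableEq V] (G : SimpleGraph V) [DecidableRel G.Adj]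
    (T : Finset V) (k : ℕ) (r : V) (Z : Finset V) : Set (Finset V) :=
  {X | IsCore G T k r X ∧ Z ⊆ X}

open Finset

section Neighbourhood

variable {V : Type*} [Fintype V] [DecidableEq V] (G : SimpleGraph V) [DecidableRel G.Adj]

lemma mem_nbr {X : Finset V} {v : V} : v ∈ nbr G X ↔ v ∉ X ∧ ∃ u ∈ X, G.Adj u v := by
  simp [nbr]

lemma cl_mono {X Y : Finset V} (h : X ⊆ Y) : cl G X ⊆ cl G Y := by
  intro v hv
  rcases mem_union.1 hv with hvX | hvX
  · exact mem_union_left _ (h hvX)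
  · obtain ⟨-, u, hu, huv⟩ := (mem_nbr G).1 hvX
    by_cases hvY : v ∈ Y
    · exact mem_union_left _ hvY
    · exact mem_union_right _ ((mem_nbr G).2 ⟨hvY, u, h hu, huv⟩)

lemma nbr_union_subset (X Y : Finset V) : nbr G (X ∪ Y) ⊆ nbr G X ∪ nbr G Y := by
  intro v hv
  obtain ⟨hv, u, hu, huv⟩ := (mem_nbr G).1 hv
  rw [mem_union, not_or] at hv
  rcases mem_union.1 hu with hu | hu
  · exact mem_union_left _ ((mem_nbr G).2 ⟨hv.1, u, hu, huv⟩)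
  · exact mem_union_right _ ((mem_nbr G).2 ⟨hv.2, u, hu, huv⟩)

lemma nbr_inter_subset (X Y : Finset V) : nbr G (X ∩ Y) ⊆ nbr G X ∪ nbr G Y := by
  intro v hv
  obtain ⟨hv, u, hu, huv⟩ := (mem_nbr G).1 hv
  rw [mem_inter] at hu
  rcases not_and_or.1 (mem_inter.not.1 hv) with hv | hv
  · exact mem_union_left _ ((mem_nbr G).2 ⟨hv, u, hu.1, huv⟩)
  · exact mem_union_right _ ((mem_nbr G).2 ⟨hv, u, hu.2, huv⟩)

lemma nbr_inter_inter_nbr_union_subset (X Y : Finset V) :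
    nbr G (X ∩ Y) ∩ nbr G (X ∪ Y) ⊆ nbr G X ∩ nbr G Y := by
  intro v hv
  obtain ⟨-, u, hu, huv⟩ := (mem_nbr G).1 (mem_inter.1 hv).1
  obtain ⟨hv, -⟩ := (mem_nbr G).1 (mem_inter.1 hv).2
  rw [mem_union, not_or] at hv
  rw [mem_inter] at hu
  exact mem_inter.2 ⟨(mem_nbr G).2 ⟨hv.1, u, hu.1, huv⟩, (mem_nbr G).2 ⟨hv.2, u, hu.2, huv⟩⟩

lemma cl_union (X Y : Finset V) : cl G (X ∪ Y) = cl G X ∪ cl G Y := by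
  refine Subset.antisymm (fun v hv => ?_)
    (union_subset (cl_mono G subset_union_left) (cl_mono G subset_union_right))
  rcases mem_union.1 hv with hv | hv
  · rcases mem_union.1 hv with hv | hv
    · exact mem_union_left _ (mem_union_left _ hv)
    · exact mem_union_right _ (mem_union_left _ hv)
  · rcases mem_union.1 (nbr_union_subset G X Y hv) with hv | hv
    · exact mem_union_left _ (mem_union_right _ hv)
    · exact mem_union_right _ (mem_union_right _ hv)

lemma card_nbr_inter_add_card_nbr_union_le (T X Y : Finset V) :
    #(nbr G (X ∩ Y) ∩ T) + #(nbr G (X ∪ Y) ∩ T) ≤ #(nbr G X ∩ T) + #(nbr G Y ∩ T) := by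
  have hunion : (nbr G (X ∩ Y) ∩ T) ∪ (nbr G (X ∪ Y) ∩ T) ⊆ (nbr G X ∩ T) ∪ (nbr G Y ∩ T) := by
    rw [← union_inter_distrib_right, ← union_inter_distrib_right]
    exact inter_subset_inter_right (union_subset (nbr_inter_subset G X Y) (nbr_union_subset G X Y))
  have hinter : (nbr G (X ∩ Y) ∩ T) ∩ (nbr G (X ∪ Y) ∩ T) ⊆ (nbr G X ∩ T) ∩ (nbr G Y ∩ T) := by
    rw [← inter_inter_distrib_right, ← inter_inter_distrib_right]
    exact inter_subset_inter_right (nbr_inter_inter_nbr_union_subset G X Y)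
  calc #(nbr G (X ∩ Y) ∩ T) + #(nbr G (X ∪ Y) ∩ T)
      = #((nbr G (X ∩ Y) ∩ T) ∪ (nbr G (X ∪ Y) ∩ T))
        + #((nbr G (X ∩ Y) ∩ T) ∩ (nbr G (X ∪ Y) ∩ T)) := (card_union_add_card_inter _ _).symm
    _ ≤ #((nbr G X ∩ T) ∪ (nbr G Y ∩ T)) + #((nbr G X ∩ T) ∩ (nbr G Y ∩ T)) :=
        Nat.add_le_add (card_le_card hunion) (card_le_card hinter)
    _ = #(nbr G X ∩ T) + #(nbr G Y ∩ T) := card_union_add_card_inter _ _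

end Neighbourhood

section DemandCut

variable {V : Type*} [Fintype V] [DecidableEq V] {G : SimpleGraph V} [DecidableRel G.Adj]
  {T : Finset V} {k : ℕ} {r : V}

lemma IsDemand.exists_isMinCore_subset {X : Finset V} (hX : IsDemand G T k r X) :
    ∃ M, IsMinCore G T k r M ∧ M ⊆ X := by
  induction X using Finset.strongInduction with
  | _ X ih =>
    by_cases hmin : ∀ Y, IsDemand G T k r Y → Y ⊆ X → Y = X
    · exact ⟨X, ⟨hX, hmin⟩, Subset.rfl⟩
    · push Not at hmin
      obtain ⟨Y, hY, hYX, hne⟩ := hmin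
      obtain ⟨M, hM, hMY⟩ := ih Y (Finset.ssubset_iff_subset_ne.2 ⟨hYX, hne⟩) hY
      exact ⟨M, hM, hMY.trans hYX⟩

lemma IsDemand.inter
    (hTconn : ∀ Z : Finset V, (Z ∩ T).Nonempty → (T \ cl G Z).Nonempty →
      k - 1 ≤ #(nbr G Z ∩ T))
    (hr : r ∈ T) {X Y : Finset V} (hX : IsDemand G T k r X) (hY : IsDemand G T k r Y)
    (hXY : (X ∩ Y ∩ T).Nonempty) : IsDemand G T k r (X ∩ Y) := by
  obtain ⟨hXT, ⟨t, ht⟩, hrX, hXk⟩ := hX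
  obtain ⟨-, -, hrY, hYk⟩ := hY
  have hcl : cl G (X ∩ Y) ⊆ cl G X := cl_mono G inter_subset_left
  have ht' : t ∈ T \ cl G (X ∩ Y) := sdiff_subset_sdiff Subset.rfl hcl ht
  have hrU : r ∉ cl G (X ∪ Y) := by simp [cl_union, hrX, hrY]
  have hI := hTconn (X ∩ Y) hXY ⟨t, ht'⟩
  have hU := hTconn (X ∪ Y) (hXT.mono (inter_subset_inter_right subset_union_left))
    ⟨r, mem_sdiff.2 ⟨hr, hrU⟩⟩
  have hsub := card_nbr_inter_add_card_nbr_union_le G T X Y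
  exact ⟨hXY, ⟨t, ht'⟩, fun h => hrX (hcl h), by omega⟩

end DemandCut

theorem stmt_9_general {V : Type*} [Fintype V] [DecidableEq V]
    (G : SimpleGraph V) [DecidableRel G.Adj] (k : ℕ)
    (T : Finset V)
    -- |Γ_T(Z)| ≥ k-1 for every Steiner T-cut Z
    (hTconn : ∀ Z : Finset V, (Z ∩ T).Nonempty → (T \ cl G Z).Nonempty →
      k - 1 ≤ (nbr G Z ∩ T).card)
    (r : V) (hr : r ∈ T)
    (Z W : Finset V) (hZ : IsMinCore G T k r Z) (hW : IsMinCore G T k r W) (hZW : Z ≠ W)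
    (X Y : Finset V) (hX : X ∈ coreFam G T k r Z) (hY : Y ∈ coreFam G T k r W) :
    X ∩ Y ∩ T = ∅ := by
  obtain ⟨⟨hXd, hXu⟩, hZX⟩ := hX
  obtain ⟨⟨hYd, hYu⟩, hWY⟩ := hY
  by_contra hne
  obtain ⟨M, hM, hMXY⟩ :=
    (hXd.inter hTconn hr hYd (nonempty_iff_ne_empty.2 hne)).exists_isMinCore_subset
  have hMZ : M = Z := hXu.unique ⟨hM, hMXY.trans inter_subset_left⟩ ⟨hZ, hZX⟩
  have hMW : M = W := hYu.unique ⟨hM, hMXY.trans inter_subset_right⟩ ⟨hW, hWY⟩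
  exact hZW (hMZ ▸ hMW)

theorem stmt_9 {V : Type*} [Fintype V] [DecidableEq V]
    (G : SimpleGraph V) [DecidableRel G.Adj] (k : ℕ) (hk : 1 ≤ k)
    (T : Finset V)
    -- |Γ_T(Z)| ≥ k-1 for every Steiner T-cut Z
    (hTconn : ∀ Z : Finset V, (Z ∩ T).Nonempty → (T \ cl G Z).Nonempty →
      k - 1 ≤ (nbr G Z ∩ T).card)
    (r : V) (hr : r ∈ T)
    (Z W : Finset V) (hZ : IsMinCore G T k r Z) (hW : IsMinCore G T k r W) (hZW : Z ≠ W)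
    (X Y : Finset V) (hX : X ∈ coreFam G T k r Z) (hY : Y ∈ coreFam G T k r W) :
    X ∩ Y ∩ T = ∅ :=
  stmt_9_general G k T hTconn r hr Z W hZ hW hZW X Y hX hY
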